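/- For all integers k ≥ 3, we have 2(k+1)(k+1)^k > (3k+1)k^k + (k−1); equivalently, P_ℝ(k+1) < 0 where P_ℝ(m) = 2(m−1)^{k+1} + (k+1)(m−1)^k − 2(k+1)m^k + (k−1). -/
import Mathlib

lemma aux_pow (k : ℕ) : ∀ n : ℕ, (n + k) * k ^ n ≤ k * (k + 1) ^ n := by
  intro n
  induction n with
  | zero => simp
  | succ n ih =>
    have h1 : (n + 1 + k) * k ^ (n + 1) ≤ (n + k) * k ^ n * (k + 1) := by
      ring_nf
      nlinarith [pow_pos (Nat.zero_lt_succ 0) n, Nat.zero_le (n * k ^ n)]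
    calc (n + 1 + k) * k ^ (n + 1) ≤ (n + k) * k ^ n * (k + 1) := h1
      _ ≤ k * (k + 1) ^ n * (k + 1) := Nat.mul_le_mul_right _ ih
      _ = k * (k + 1) ^ (n + 1) := by ring

lemma two_pow_le (k : ℕ) (hk : 1 ≤ k) : 2 * k ^ k ≤ (k + 1) ^ k := by
  have h := aux_pow k k
  have h2 : k * (2 * k ^ k) ≤ k * (k + 1) ^ k := by
    calc k * (2 * k ^ k) = (k + k) * k ^ k := by ring
      _ ≤ k * (k + 1) ^ k := h
  exact Nat.le_of_mul_le_mul_left h2 (by omega)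

theorem P_neg_at_k_add_one (k : ℕ) (hk : 3 ≤ k) :
    2 * ((k : ℤ) + 1) * ((k : ℤ) + 1) ^ k > (3 * (k : ℤ) + 1) * (k : ℤ) ^ k + ((k : ℤ) - 1) ∧
    2 * (((k : ℤ) + 1) - 1) ^ (k + 1) + ((k : ℤ) + 1) * (((k : ℤ) + 1) - 1) ^ k
      - 2 * ((k : ℤ) + 1) * ((k : ℤ) + 1) ^ k + ((k : ℤ) - 1) < 0 := by
  have hZ : 2 * (k : ℤ) ^ k ≤ ((k : ℤ) + 1) ^ k := by
    have := two_pow_le k (by omega)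
    exact_mod_cast this
  have hkZ : (3 : ℤ) ≤ (k : ℤ) := by exact_mod_cast hk
  have hp : (k : ℤ) ≤ (k : ℤ) ^ k := by
    calc (k : ℤ) = (k : ℤ) ^ 1 := (pow_one _).symm
      _ ≤ (k : ℤ) ^ k := pow_le_pow_right₀ (by omega) (by omega)
  have h1 : 2 * ((k : ℤ) + 1) * ((k : ℤ) + 1) ^ k > (3 * (k : ℤ) + 1) * (k : ℤ) ^ k + ((k : ℤ) - 1) := by
    nlinarith [pow_pos (show (0:ℤ) < k by omega) k]
  refine ⟨h1, ?_⟩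
  have : 2 * (((k : ℤ) + 1) - 1) ^ (k + 1) + ((k : ℤ) + 1) * (((k : ℤ) + 1) - 1) ^ k
      = (3 * (k : ℤ) + 1) * (k : ℤ) ^ k := by
    simp only [add_sub_cancel_right]
    ring
  linarith [this]
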